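/- For every DLS program P, the least fixed point of the immediate consequence operator IC_P, taken in the complete lattice of databases ordered by set inclusion (with bottom element the empty database), is a subfact-closed database. -/

import Mathlib

namespace DLS

/-! Datalog with first-class facts (DLS): basic syntax and semantics. -/

variable {Rel Lit Var : Type}

/-- A value is either a literal or a fact `R(v₁,…,vₙ)`. -/
inductive Val (Rel Lit : Type) : Type where
  | lit : Lit → Val Rel Lit
  | fact : Rel → List (Val Rel Lit) → Val Rel Lit

/-- A fact is a relation symbol applied to a finite list of values. -/
abbrev Fact (Rel Lit : Type) : Type := Rel × List (Val Rel Lit)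

/-- A database is a set of facts. -/
abbrev Database (Rel Lit : Type) : Type := Set (Fact Rel Lit)

def Fact.toVal (f : Fact Rel Lit) : Val Rel Lit := Val.fact f.1 f.2

mutual
/-- All subfacts of a value: `subfact(R(v₁,…,vₙ)) = {R(v₁,…,vₙ)} ∪ ⋃ᵢ subfact(vᵢ)`,
    and `subfact(v) = ∅` for a literal `v`. -/
def Val.subfacts : Val Rel Lit → Set (Fact Rel Lit)
  | .lit _ => ∅
  | .fact R args => insert (R, args) (Val.subfactsList args)
def Val.subfactsList : List (Val Rel Lit) → Set (Fact Rel Lit)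
  | [] => ∅
  | v :: vs => v.subfacts ∪ Val.subfactsList vs
end

/-- The `subfact` function on facts. -/
def Fact.subfact (f : Fact Rel Lit) : Set (Fact Rel Lit) :=
  Val.subfacts (Val.fact f.1 f.2)

/-- A database is subfact-closed if `db = ⋃ {subfact(f) | f ∈ db}`. -/
def SubfactClosed (db : Database Rel Lit) : Prop :=
  db = ⋃ f ∈ db, Fact.subfact f

/-- An argument of a clause: a variable, a literal, or a (sub)clause. -/
inductive Arg (Rel Lit Var : Type) : Type where
  | var : Var → Arg Rel Lit Var
  | lit : Lit → Arg Rel Lit Var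
  | clause : Rel → List (Arg Rel Lit Var) → Arg Rel Lit Var

/-- A clause is a relation symbol applied to a finite list of arguments. -/
abbrev Clause (Rel Lit Var : Type) : Type := Rel × List (Arg Rel Lit Var)

/-- A substitution maps variables to values. -/
abbrev Subst (Rel Lit Var : Type) : Type := Var → Val Rel Lit

mutual
/-- Applying a substitution to an argument yields a value. -/
def Arg.subst (θ : Subst Rel Lit Var) : Arg Rel Lit Var → Val Rel Lit
  | .var x => θ x
  | .lit l => .lit l
  | .clause R args => .fact R (Arg.substList θ args)
def Arg.substList (θ : Subst Rel Lit Var) : List (Arg Rel Lit Var) → List (Val Rel Lit)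
  | [] => []
  | a :: as => Arg.subst θ a :: Arg.substList θ as
end

/-- `c[θ]`: the fact obtained by substituting each variable of clause `c` by its image. -/
def Clause.subst (θ : Subst Rel Lit Var) (c : Clause Rel Lit Var) : Fact Rel Lit :=
  (c.1, Arg.substList θ c.2)

mutual
/-- The variables occurring in an argument. -/
def Arg.vars : Arg Rel Lit Var → Set Var
  | .var x => {x}
  | .lit _ => ∅
  | .clause _ args => Arg.varsList args
def Arg.varsList : List (Arg Rel Lit Var) → Set Var
  | [] => ∅
  | a :: as => a.vars ∪ Arg.varsList as
end

/-- The variables occurring in a clause. -/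
def Clause.vars (c : Clause Rel Lit Var) : Set Var := Arg.varsList c.2

mutual
/-- The literals occurring in an argument. -/
def Arg.lits : Arg Rel Lit Var → Set Lit
  | .var _ => ∅
  | .lit l => {l}
  | .clause _ args => Arg.litsList args
def Arg.litsList : List (Arg Rel Lit Var) → Set Lit
  | [] => ∅
  | a :: as => a.lits ∪ Arg.litsList as
end

/-- The literals occurring in a clause. -/
def Clause.lits (c : Clause Rel Lit Var) : Set Lit := Arg.litsList c.2

/-- A rule has a head clause and a finite set of body clauses. -/
structure Rule (Rel Lit Var : Type) : Type where
  head : Clause Rel Lit Var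
  body : Set (Clause Rel Lit Var)
  body_finite : body.Finite

/-- The literals occurring in a rule. -/
def Rule.lits (R : Rule Rel Lit Var) : Set Lit :=
  R.head.lits ∪ ⋃ c ∈ R.body, c.lits

/-- A rule is well-scoped if every variable of the head occurs in the body. -/
def Rule.WellScoped (R : Rule Rel Lit Var) : Prop :=
  R.head.vars ⊆ ⋃ c ∈ R.body, c.vars

/-- Immediate consequence of a rule:
    `IC_R(db) = db ∪ ⋃ { subfact(Head(R)[θ]) | θ with Body(R)[θ] ⊆ db }`. -/
def Rule.IC (R : Rule Rel Lit Var) (db : Database Rel Lit) : Database Rel Lit :=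
  db ∪ ⋃ (θ : Subst Rel Lit Var) (_ : ∀ c ∈ R.body, Clause.subst θ c ∈ db),
      Fact.subfact (Clause.subst θ R.head)

/-- A DLS program is a finite set of well-scoped rules. -/
structure Program (Rel Lit Var : Type) : Type where
  rules : Set (Rule Rel Lit Var)
  rules_finite : rules.Finite
  wellScoped : ∀ R ∈ rules, R.WellScoped

/-- Immediate consequence of a program: `IC_P(db) = db ∪ ⋃_{R ∈ P} IC_R(db)`. -/
def Program.IC (P : Program Rel Lit Var) (db : Database Rel Lit) : Database Rel Lit :=
  db ∪ ⋃ R ∈ P.rules, R.IC db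

theorem Rule.IC_mono (R : Rule Rel Lit Var) : Monotone R.IC := by
  intro a b hab x hx
  rcases hx with hx | hx
  · exact Or.inl (hab hx)
  · right
    simp only [Set.mem_iUnion] at hx ⊢
    obtain ⟨θ, hθ, hm⟩ := hx
    exact ⟨θ, fun c hc => hab (hθ c hc), hm⟩

theorem Program.IC_mono (P : Program Rel Lit Var) : Monotone P.IC := by
  intro a b hab x hx
  rcases hx with hx | hx
  · exact Or.inl (hab hx)
  · right
    simp only [Set.mem_iUnion] at hx ⊢
    obtain ⟨R, hR, hm⟩ := hx
    exact ⟨R, hR, R.IC_mono hab hm⟩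

/-- The immediate consequence operator `IC_P`, as a monotone map on the complete
    lattice of databases ordered by inclusion. Its least fixed point is
    `OrderHom.lfp P.ICHom`. -/
def Program.ICHom (P : Program Rel Lit Var) : Database Rel Lit →o Database Rel Lit :=
  ⟨P.IC, P.IC_mono⟩

/-- `I ⊨ R`: for every substitution θ, `Body(R)[θ] ⊆ I` implies `Head(R)[θ] ∈ I`. -/
def Models (I : Database Rel Lit) (R : Rule Rel Lit Var) : Prop :=
  ∀ θ : Subst Rel Lit Var, (∀ c ∈ R.body, Clause.subst θ c ∈ I) → Clause.subst θ R.head ∈ I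

/-- A Herbrand model of `P` is a subfact-closed database satisfying every rule of `P`. -/
def HerbrandModel (P : Program Rel Lit Var) (I : Database Rel Lit) : Prop :=
  SubfactClosed I ∧ ∀ R ∈ P.rules, Models I R

/-- An argument is flat if it is a variable or a literal (not a nested clause). -/
def Arg.IsFlat : Arg Rel Lit Var → Prop
  | .clause _ _ => False
  | _ => True

/-- A clause is flat if every argument is a variable or a literal. -/
def Clause.Flat (c : Clause Rel Lit Var) : Prop := ∀ a ∈ c.2, a.IsFlat

/-- A rule is flat if its head clause and all its body clauses are flat. -/
def Rule.Flat (R : Rule Rel Lit Var) : Prop := R.head.Flat ∧ ∀ c ∈ R.body, c.Flat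

/-- A fact is flat if every argument in its argument list is a literal. -/
def Fact.Flat (f : Fact Rel Lit) : Prop := ∀ v ∈ f.2, ∃ l : Lit, v = Val.lit l

/-- `natFact z s n` encodes the natural number `n` as the fact
    `s(s(...(z())...))` with `n` applications of `s`. -/
def natFact (z s : Rel) : ℕ → Fact Rel Lit
  | 0 => (z, [])
  | n + 1 => (s, [(natFact z s n).toVal])

/-! `IC_P` preserves subfact-closedness: it only adds sets `subfact(f)`, which are
subfact-closed because a subfact of a subfact is a subfact. Subfact-closed databases are
also closed under arbitrary unions, so the least fixed point, obtained from `∅` by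
iterating `IC_P` and taking unions, is subfact-closed. -/

mutual
theorem Val.subfact_subset_subfacts (v : Val Rel Lit) :
    ∀ g ∈ v.subfacts, g.subfact ⊆ v.subfacts := by
  cases v with
  | lit _ => intro g hg; simp [Val.subfacts] at hg
  | fact R args =>
    intro g hg
    simp only [Val.subfacts, Set.mem_insert_iff] at hg
    rcases hg with rfl | hg
    · exact subset_rfl
    · exact (Val.subfact_subset_subfactsList args g hg).trans (Set.subset_insert _ _)
theorem Val.subfact_subset_subfactsList (vs : List (Val Rel Lit)) :
    ∀ g ∈ Val.subfactsList vs, g.subfact ⊆ Val.subfactsList vs := by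
  cases vs with
  | nil => intro g hg; simp [Val.subfactsList] at hg
  | cons v vs =>
    intro g hg
    simp only [Val.subfactsList, Set.mem_union] at hg
    rcases hg with hg | hg
    · exact (Val.subfact_subset_subfacts v g hg).trans Set.subset_union_left
    · exact (Val.subfact_subset_subfactsList vs g hg).trans Set.subset_union_right
end

theorem Fact.mem_subfact_self (f : Fact Rel Lit) : f ∈ f.subfact :=
  Set.mem_insert _ _

theorem subfactClosed_iff {db : Database Rel Lit} :
    SubfactClosed db ↔ ∀ f ∈ db, f.subfact ⊆ db := by
  refine ⟨fun h f hf => h ▸ Set.subset_biUnion_of_mem hf, fun h => ?_⟩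
  exact Set.Subset.antisymm (fun f hf => Set.mem_biUnion hf f.mem_subfact_self)
    (Set.iUnion₂_subset h)

theorem Fact.subfactClosed_subfact (f : Fact Rel Lit) : SubfactClosed f.subfact :=
  subfactClosed_iff.2 fun _ => Val.subfact_subset_subfacts _ _

theorem SubfactClosed.union {db db' : Database Rel Lit} (h : SubfactClosed db)
    (h' : SubfactClosed db') : SubfactClosed (db ∪ db') := by
  rw [subfactClosed_iff] at *
  rintro f (hf | hf)
  · exact (h f hf).trans Set.subset_union_left
  · exact (h' f hf).trans Set.subset_union_right

theorem subfactClosed_iUnion {ι : Sort*} {s : ι → Database Rel Lit}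
    (h : ∀ i, SubfactClosed (s i)) : SubfactClosed (⋃ i, s i) := by
  refine subfactClosed_iff.2 fun f hf => ?_
  obtain ⟨i, hi⟩ := Set.mem_iUnion.1 hf
  exact (subfactClosed_iff.1 (h i) f hi).trans (Set.subset_iUnion s i)

theorem subfactClosed_sUnion {S : Set (Database Rel Lit)} (h : ∀ db ∈ S, SubfactClosed db) :
    SubfactClosed (⋃₀ S) := by
  rw [Set.sUnion_eq_iUnion]
  exact subfactClosed_iUnion fun db => h db db.2

theorem SubfactClosed.ruleIC {db : Database Rel Lit} (h : SubfactClosed db)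
    (R : Rule Rel Lit Var) : SubfactClosed (R.IC db) :=
  h.union <| subfactClosed_iUnion fun θ =>
    subfactClosed_iUnion fun _ => (Clause.subst θ R.head).subfactClosed_subfact

theorem SubfactClosed.programIC {db : Database Rel Lit} (h : SubfactClosed db)
    (P : Program Rel Lit Var) : SubfactClosed (P.IC db) :=
  h.union <| subfactClosed_iUnion fun R => subfactClosed_iUnion fun _ => h.ruleIC R

/-- For every DLS program `P`, the least fixed point of the
immediate consequence operator `IC_P`, taken in the complete lattice of
databases ordered by set inclusion, is a subfact-closed database. -/
theorem lfp_IC_subfactClosed {Rel Lit Var : Type} (P : Program Rel Lit Var) :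
    SubfactClosed (OrderHom.lfp P.ICHom) :=
  OrderHom.lfp_induction P.ICHom (fun _ h _ => h.programIC P) fun _ => subfactClosed_sUnion

end DLS
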